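/- For every C ∈ [0,1], the isotropic box P^iso(a,b|x,y) = (1/4)[1 + C(−1)^{a⊕b⊕xy}] (a,b,x,y ∈ {0,1}) satisfies CHSH_E(P^iso) = −2·h((1+C)/2) ≤ 0, where h is the binary entropy. In particular, no isotropic box violates the entropic CHSH inequality CHSH_E ≤ 0. -/
import Mathlib


/-- Shannon entropy (in bits) of a finitely supported weight function,
with the convention `0 * logb 2 0 = 0` (automatic since `Real.logb 2 0 = 0`). -/
noncomputable def shannonEntropy {β : Type*} [Fintype β] (q : β → ℝ) : ℝ :=
  -∑ b, q b * Real.logb 2 (q b)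

/-- Joint Shannon entropy of a bipartite outcome distribution. -/
noncomputable def pairEntropy {β γ : Type*} [Fintype β] [Fintype γ] (q : β → γ → ℝ) : ℝ :=
  -∑ b, ∑ c, q b c * Real.logb 2 (q b c)

/-- First-component marginal of a bipartite outcome distribution. -/
noncomputable def margFst {β γ : Type*} [Fintype γ] (q : β → γ → ℝ) : β → ℝ :=
  fun b => ∑ c, q b c

/-- Second-component marginal of a bipartite outcome distribution. -/
noncomputable def margSnd {β γ : Type*} [Fintype β] (q : β → γ → ℝ) : γ → ℝ :=
  fun c => ∑ b, q b c

/-- The entropic CHSH expression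
`CHSH_E = H(A₁B₁) + H(A₀) + H(B₀) − H(A₀B₀) − H(A₀B₁) − H(A₁B₀)`
of a CHSH box `P x y a b = P(a,b|x,y)`. -/
noncomputable def CHSHE {β γ : Type*} [Fintype β] [Fintype γ]
    (P : Fin 2 → Fin 2 → β → γ → ℝ) : ℝ :=
  pairEntropy (P 1 1) + shannonEntropy (margFst (P 0 0)) + shannonEntropy (margSnd (P 0 0))
    - pairEntropy (P 0 0) - pairEntropy (P 0 1) - pairEntropy (P 1 0)

/-- The binary entropy `h(t) = −t log₂ t − (1−t) log₂ (1−t)`. -/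
noncomputable def binEnt (t : ℝ) : ℝ :=
  -t * Real.logb 2 t - (1 - t) * Real.logb 2 (1 - t)

/-- The isotropic box `P^iso(a,b|x,y) = (1/4)[1 + C(−1)^(a⊕b⊕xy)]`. -/
noncomputable def Piso (C : ℝ) : Fin 2 → Fin 2 → Fin 2 → Fin 2 → ℝ :=
  fun x y a b => (1 / 4) * (1 + C * (-1 : ℝ) ^ (a.val + b.val + x.val * y.val))

lemma logb_two_four : Real.logb 2 (4:ℝ) = 2 := by
  rw [show (4:ℝ) = 2^(2:ℕ) by norm_num, Real.logb_pow, Real.logb_self_eq_one] <;> norm_num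

lemma logb_two_two' : Real.logb 2 (2:ℝ) = 1 := by
  rw [Real.logb_self_eq_one] <;> norm_num

/-- For every `C ∈ [0,1]`, the isotropic box satisfies
`CHSH_E(P^iso) = −2·h((1+C)/2) ≤ 0`; in particular no isotropic box violates the
entropic CHSH inequality `CHSH_E ≤ 0`. -/
theorem isotropic_box_CHSHE (C : ℝ) (hC0 : 0 ≤ C) (hC1 : C ≤ 1) :
    CHSHE (Piso C) = -2 * binEnt ((1 + C) / 2) ∧ CHSHE (Piso C) ≤ 0 := by
  have hbE : 0 ≤ binEnt ((1 + C) / 2) := by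
    have h1 : Real.logb 2 ((1 + C) / 2) ≤ 0 := by
      apply Real.logb_nonpos (by norm_num) (by linarith) (by linarith)
    have h2 : Real.logb 2 (1 - (1 + C) / 2) ≤ 0 := by
      apply Real.logb_nonpos (by norm_num) (by linarith) (by linarith)
    have h3 : (0:ℝ) ≤ (1 + C) / 2 := by linarith
    have h4 : (0:ℝ) ≤ 1 - (1 + C) / 2 := by linarith
    unfold binEnt
    nlinarith [mul_nonneg h3 (neg_nonneg.mpr h1), mul_nonneg h4 (neg_nonneg.mpr h2)]
  have key : CHSHE (Piso C) = -2 * binEnt ((1 + C) / 2) := by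
    rcases eq_or_lt_of_le hC1 with h1 | h1
    · subst h1
      unfold CHSHE pairEntropy shannonEntropy margFst margSnd Piso binEnt
      simp [Fin.sum_univ_two]
      norm_num
    · have hu : (0:ℝ) < 1 + C := by linarith
      have hv : (0:ℝ) < 1 - C := by linarith
      have e1 : Real.logb 2 ((1 + C) / 4) = Real.logb 2 (1 + C) - 2 := by
        rw [Real.logb_div (by positivity) (by norm_num), logb_two_four]
      have e2 : Real.logb 2 ((1 - C) / 4) = Real.logb 2 (1 - C) - 2 := by
        rw [Real.logb_div (by positivity) (by norm_num), logb_two_four]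
      have e3 : Real.logb 2 ((1 + C) / 2) = Real.logb 2 (1 + C) - 1 := by
        rw [Real.logb_div (by positivity) (by norm_num), logb_two_two']
      have e4 : Real.logb 2 ((1 - C) / 2) = Real.logb 2 (1 - C) - 1 := by
        rw [Real.logb_div (by positivity) (by norm_num), logb_two_two']
      have eh : Real.logb 2 ((2:ℝ)⁻¹) = -1 := by
        rw [show ((2:ℝ))⁻¹ = 1/2 by norm_num, Real.logb_div (by norm_num) (by norm_num),
          Real.logb_one, logb_two_two']; ring
      unfold CHSHE pairEntropy shannonEntropy margFst margSnd Piso binEnt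
      simp only [Fin.sum_univ_two, Fin.val_zero, Fin.val_one]
      norm_num
      rw [show (1:ℝ)/4*(1+C) = (1+C)/4 by ring,
        show (1:ℝ)/4*(1+-C) = (1-C)/4 by ring,
        show (1-C)/4+(1+C)/4 = (1:ℝ)/2 by ring,
        show (1+C)/4+(1-C)/4 = (1:ℝ)/2 by ring,
        show (1:ℝ)-(1+C)/2 = (1-C)/2 by ring]
      have eh2 : Real.logb 2 ((1:ℝ)/2) = -1 := by
        rw [Real.logb_div (by norm_num) (by norm_num), Real.logb_one, logb_two_two']; ring
      rw [e1, e2, e3, e4, eh2]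
      ring
  exact ⟨key, by rw [key]; linarith⟩
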